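/- arXiv:1009.2258 — 3 statements merged into one kernel-verified Lean document; each statement's English description precedes it below -/
import Mathlib

section
/- Let (V, Ω) be a real symplectic vector space of dimension 2g, let W be an n-dimensional real vector space (n ≥ 1), and let E ⊆ Hom_ℝ(W, V) be a linear subspace of codimension q ≥ 1. If g ≥ 2nq, then there exists a 2n-dimensional linear subspace P ⊆ V such that the restriction of Ω to P is nondegenerate (P is a symplectic subspace) and every linear map f : W → V whose image is contained in P belongs to E. -/
/-!
Let `K ⊆ V` consist of the `v` with `φ ⊗ v ∈ E` for every `φ ∈ W*`. Every `f = ∑ φᵢ ⊗ f(wᵢ)` with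
image in `K` lies in `E`, and `K` is the kernel of a map `V → Hom(W*, Hom(W, V)/E)`, so its
codimension is at most `nq`. A complement `S` of the radical `K ∩ K^Ω` inside `K` is symplectic,
of dimension at least `2 dim K - 2g ≥ 2g - 2nq ≥ 2n`. Splitting off hyperbolic planes from `S`
one at a time yields a symplectic subspace of dimension exactly `2n`.
-/

open Module Submodule

namespace LinearMap.BilinForm

-- `Disjoint S (B.orthogonal S)` expresses that `B` is nondegenerate on `S`.
variable {k V : Type*} [Field k] [AddCommGroup V] [Module k V] {B : LinearMap.BilinForm k V}

theorem orthogonal_sup (A C : Submodule k V) :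
    B.orthogonal (A ⊔ C) = B.orthogonal A ⊓ B.orthogonal C := by
  refine le_antisymm (le_inf (orthogonal_le le_sup_left) (orthogonal_le le_sup_right)) ?_
  rintro x ⟨hxA, hxC⟩ y hy
  obtain ⟨a, ha, c, hc, rfl⟩ := mem_sup.1 hy
  simp [(hxA a ha : B a x = 0), (hxC c hc : B c x = 0)]

theorem disjoint_orthogonal_sup {A C : Submodule k V} (hA : Disjoint A (B.orthogonal A))
    (hC : Disjoint C (B.orthogonal C)) (hCA : C ≤ B.orthogonal A) :
    Disjoint (A ⊔ C) (B.orthogonal (A ⊔ C)) := by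
  rw [disjoint_def, orthogonal_sup]
  rintro x hx ⟨hxA, hxC⟩
  obtain ⟨a, ha, c, hc, rfl⟩ := mem_sup.1 hx
  have ha0 : a = 0 := disjoint_def.1 hA a ha (by simpa using sub_mem hxA (hCA hc))
  subst ha0
  rw [zero_add] at hxC ⊢
  exact disjoint_def.1 hC c hc hxC

variable [FiniteDimensional k V]

theorem sup_orthogonal_inf_eq (hB : B.IsRefl) {A S : Submodule k V} (hAS : A ≤ S)
    (hA : Disjoint A (B.orthogonal A)) : A ⊔ B.orthogonal A ⊓ S = S := by
  rw [← sup_inf_assoc_of_le _ hAS, ((isCompl_orthogonal_iff_disjoint hB).2 hA).sup_eq_top,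
    top_inf_eq]

theorem disjoint_orthogonal_orthogonal_inf (hB : B.IsRefl) {A S : Submodule k V}
    (hS : Disjoint S (B.orthogonal S)) (hAS : A ≤ S) (hA : Disjoint A (B.orthogonal A)) :
    Disjoint (B.orthogonal A ⊓ S) (B.orthogonal (B.orthogonal A ⊓ S)) := by
  rw [disjoint_def]
  rintro x ⟨hxA, hxS⟩ hx
  refine disjoint_def.1 hS x hxS ?_
  rw [← sup_orthogonal_inf_eq hB hAS hA, orthogonal_sup]
  exact ⟨hxA, hx⟩

theorem finrank_add_finrank_orthogonal_inf (hB : B.IsRefl) {A S : Submodule k V} (hAS : A ≤ S)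
    (hA : Disjoint A (B.orthogonal A)) :
    finrank k A + finrank k (B.orthogonal A ⊓ S : Submodule k V) = finrank k S := by
  have hdisj : A ⊓ (B.orthogonal A ⊓ S) = ⊥ := (hA.mono_right inf_le_left).eq_bot
  have := finrank_sup_add_finrank_inf_eq A (B.orthogonal A ⊓ S)
  rw [hdisj, finrank_bot, add_zero, sup_orthogonal_inf_eq hB hAS hA] at this
  exact this.symm

theorem exists_le_finrank_eq_two (hB : B.IsAlt) {S : Submodule k V}
    (hS : Disjoint S (B.orthogonal S)) (hpos : 0 < finrank k S) :
    ∃ A ≤ S, finrank k A = 2 ∧ Disjoint A (B.orthogonal A) := by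
  obtain ⟨u, huS, hu0⟩ := exists_mem_ne_zero_of_ne_bot fun h : S = ⊥ => hpos.ne' (by simp [h])
  obtain ⟨v, hvS, hvu⟩ : ∃ v ∈ S, B v u ≠ 0 := by
    by_contra! h
    exact hu0 (disjoint_def.1 hS u huS h)
  have hcoeff : ∀ a b : k, B u (a • u + b • v) = 0 → B v (a • u + b • v) = 0 → a = 0 ∧ b = 0 := by
    intro a b hu hv
    have huv : B u v ≠ 0 := by rwa [← hB.neg_eq, neg_ne_zero]
    simp only [map_add, map_smul, hB.self_eq_zero, smul_eq_mul, mul_zero, zero_add, add_zero,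
      mul_eq_zero] at hu hv
    exact ⟨hv.resolve_right hvu, hu.resolve_right huv⟩
  refine ⟨span k {u, v}, span_le.2 (Set.insert_subset huS (Set.singleton_subset_iff.2 hvS)), ?_, ?_⟩
  · have hli : LinearIndependent k ![u, v] :=
      LinearIndependent.pair_iff.2 fun a b h => hcoeff a b (by simp [h]) (by simp [h])
    rw [← Matrix.range_cons_cons_empty u v ![], finrank_span_eq_card hli, Fintype.card_fin]
  · rw [disjoint_def]
    intro x hx hxo
    obtain ⟨a, b, rfl⟩ := mem_span_pair.1 hx
    obtain ⟨rfl, rfl⟩ := hcoeff a b (hxo u (subset_span (by simp))) (hxo v (subset_span (by simp)))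
    simp

theorem exists_le_finrank_eq_two_mul (hB : B.IsAlt) (m : ℕ) {S : Submodule k V}
    (hS : Disjoint S (B.orthogonal S)) (hm : 2 * m ≤ finrank k S) :
    ∃ P ≤ S, finrank k P = 2 * m ∧ Disjoint P (B.orthogonal P) := by
  induction m generalizing S with
  | zero => exact ⟨⊥, bot_le, by simp, by simp⟩
  | succ m ih =>
    obtain ⟨A, hAS, hA2, hA⟩ := exists_le_finrank_eq_two hB hS (by omega)
    have hdim := finrank_add_finrank_orthogonal_inf hB.isRefl hAS hA
    obtain ⟨P, hPS, hPm, hP⟩ := ih (disjoint_orthogonal_orthogonal_inf hB.isRefl hS hAS hA)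
      (by omega)
    have hPA : P ≤ B.orthogonal A := hPS.trans inf_le_left
    refine ⟨A ⊔ P, sup_le hAS (hPS.trans inf_le_right), ?_, disjoint_orthogonal_sup hA hP hPA⟩
    have := finrank_sup_add_finrank_inf_eq A P
    rw [(hA.mono_right hPA).eq_bot, finrank_bot] at this
    omega

theorem exists_le_two_mul_finrank_le_add (hB : B.IsRefl) (hnd : B.Nondegenerate)
    (K : Submodule k V) :
    ∃ S ≤ K, Disjoint S (B.orthogonal S) ∧ 2 * finrank k K ≤ finrank k S + finrank k V := by
  set R := K ⊓ B.orthogonal K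
  -- `C ⊓ K` is a complement of the radical `R` inside `K`
  obtain ⟨C, hC⟩ := Submodule.exists_isCompl R
  have hRS : R ⊔ C ⊓ K = K := by
    rw [← sup_inf_assoc_of_le _ inf_le_left, hC.sup_eq_top, top_inf_eq]
  refine ⟨C ⊓ K, inf_le_right, ?_, ?_⟩
  · rw [disjoint_def]
    rintro x ⟨hxC, hxK⟩ hx
    have hxR : x ∈ B.orthogonal R := fun r hr => hB _ _ (hr.2 x hxK)
    have hxK' : x ∈ B.orthogonal K := by
      rw [← hRS, orthogonal_sup]
      exact ⟨hxR, hx⟩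
    exact disjoint_def.1 hC.disjoint x ⟨hxK, hxK'⟩ hxC
  · have h1 := finrank_add_le_finrank_add_finrank R (C ⊓ K)
    have h2 : finrank k R ≤ finrank k V - finrank k K :=
      (finrank_orthogonal hnd K).symm ▸ finrank_mono inf_le_right
    rw [hRS] at h1
    have := K.finrank_le
    omega

end LinearMap.BilinForm

namespace Submodule

variable {k W V : Type*} [Field k] [AddCommGroup W] [Module k W] [AddCommGroup V] [Module k V]

def rankOneCore (E : Submodule k (W →ₗ[k] V)) : Submodule k V :=
  LinearMap.ker (LinearMap.smulRightₗ.flip.compr₂ E.mkQ)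

variable {E : Submodule k (W →ₗ[k] V)}

theorem mem_rankOneCore {v : V} : v ∈ E.rankOneCore ↔ ∀ φ : Dual k W, φ.smulRight v ∈ E := by
  simp [rankOneCore, LinearMap.ext_iff, Quotient.mk_eq_zero]

theorem mem_of_range_le_rankOneCore [FiniteDimensional k W] {f : W →ₗ[k] V}
    (hf : LinearMap.range f ≤ E.rankOneCore) : f ∈ E := by
  let b := Module.finBasis k W
  have hsum : f = ∑ i, (b.coord i).smulRight (f (b i)) :=
    b.ext fun j => by simp [Finsupp.single_apply]
  rw [hsum]
  exact E.sum_mem fun i _ => mem_rankOneCore.1 (hf ⟨b i, rfl⟩) _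

variable (E) in
theorem finrank_le_finrank_rankOneCore_add [FiniteDimensional k W] [FiniteDimensional k V] :
    finrank k V ≤ finrank k E.rankOneCore + finrank k W * finrank k ((W →ₗ[k] V) ⧸ E) := by
  have h := LinearMap.finrank_range_add_finrank_ker (LinearMap.smulRightₗ.flip.compr₂ E.mkQ)
  have hrange := (LinearMap.range (LinearMap.smulRightₗ.flip.compr₂ E.mkQ)).finrank_le
  rw [finrank_linearMap, Subspace.dual_finrank_eq] at hrange
  rw [rankOneCore]
  omega

end Submodule

theorem stmt1_general (g n q : ℕ) (hq : 1 ≤ q)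
    (V : Type*) [AddCommGroup V] [Module ℝ V] [FiniteDimensional ℝ V]
    (Ω : V →ₗ[ℝ] V →ₗ[ℝ] ℝ) (hΩalt : Ω.IsAlt) (hΩnd : Ω.Nondegenerate)
    (hV : Module.finrank ℝ V = 2 * g)
    (W : Type*) [AddCommGroup W] [Module ℝ W] [FiniteDimensional ℝ W]
    (hW : Module.finrank ℝ W = n)
    (E : Submodule ℝ (W →ₗ[ℝ] V))
    (hE : Module.finrank ℝ ((W →ₗ[ℝ] V) ⧸ E) = q)
    (hg : 2 * n * q ≤ g) :
    ∃ P : Submodule ℝ V,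
      Module.finrank ℝ P = 2 * n ∧
      (∀ x ∈ P, (∀ y ∈ P, Ω x y = 0) → x = 0) ∧
      (∀ f : W →ₗ[ℝ] V, LinearMap.range f ≤ P → f ∈ E) := by
  have hcore := E.finrank_le_finrank_rankOneCore_add
  obtain ⟨S, hSK, hS, hSdim⟩ :=
    LinearMap.BilinForm.exists_le_two_mul_finrank_le_add hΩalt.isRefl hΩnd E.rankOneCore
  have hnq : n ≤ n * q := Nat.le_mul_of_pos_right n hq
  rw [hV, hW, hE] at hcore
  rw [hV] at hSdim
  rw [mul_assoc] at hg
  obtain ⟨P, hPS, hPdim, hP⟩ :=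
    LinearMap.BilinForm.exists_le_finrank_eq_two_mul hΩalt n hS (by omega)
  refine ⟨P, hPdim, fun x hx hxP => disjoint_def.1 hP x hx fun y hy => hΩalt.isRefl x y (hxP y hy),
    fun f hf => mem_of_range_le_rankOneCore (hf.trans (hPS.trans hSK))⟩

/-- existence of a symplectic `2n`-plane `P` with `Hom(W,P) ⊆ E`. -/
theorem stmt1 (g n q : ℕ) (hn : 1 ≤ n) (hq : 1 ≤ q)
    (V : Type*) [AddCommGroup V] [Module ℝ V] [FiniteDimensional ℝ V]
    (Ω : V →ₗ[ℝ] V →ₗ[ℝ] ℝ) (hΩalt : Ω.IsAlt) (hΩnd : Ω.Nondegenerate)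
    (hV : Module.finrank ℝ V = 2 * g)
    (W : Type*) [AddCommGroup W] [Module ℝ W] [FiniteDimensional ℝ W]
    (hW : Module.finrank ℝ W = n)
    (E : Submodule ℝ (W →ₗ[ℝ] V))
    (hE : Module.finrank ℝ ((W →ₗ[ℝ] V) ⧸ E) = q)
    (hg : 2 * n * q ≤ g) :
    ∃ P : Submodule ℝ V,
      Module.finrank ℝ P = 2 * n ∧
      (∀ x ∈ P, (∀ y ∈ P, Ω x y = 0) → x = 0) ∧
      (∀ f : W →ₗ[ℝ] V, LinearMap.range f ≤ P → f ∈ E) :=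
  stmt1_general g n q hq V Ω hΩalt hΩnd hV W hW E hE hg
end

section
/- Let V be a finite-dimensional real topological vector space (e.g. ℝᵈ with its standard topology) and let S and T be finite subsets of V. Then 0 belongs to the topological interior of the set convexHull(S) + span(T) (the Minkowski sum of the convex hull of S and the linear span of T) if and only if there exist nonnegative real numbers (a_s)_{s∈S} with Σ_{s∈S} a_s = 1 and real numbers (b_t)_{t∈T} such that Σ_{s∈S} a_s·s + Σ_{t∈T} b_t·t = 0 and the set {s ∈ S : a_s ≠ 0} ∪ T spans V as a real vector space. -/
/-!
If `0` is interior to `K = conv S + span T`, a small negative multiple of the barycentre of `S`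
lies in `K`; averaging it with the barycentre writes `0` as a convex combination of `S` with
all weights positive plus an element of `span T`, and `K ⊆ span (S ∪ T)` forces that span to
be everything. Conversely, let `z = ∑ a s • s ∈ span T`. For `u = ∑ c s • s` supported where
`a ≠ 0`, the weights `a + ε (c - (∑ c) a)` stay nonnegative for small `ε > 0` and give
`z + ε (u - (∑ c) z)`, so the convex set `K` contains a positive multiple of every vector; a
convex set with this property in a finite-dimensional space has `0` in its interior.
-/

open scoped Pointwise
open Set Filter Topology

section Weights

variable {V : Type*} [AddCommGroup V] [Module ℝ V]

theorem convexHull_add_span_subset_span_union (S T : Set V) :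
    convexHull ℝ S + (Submodule.span ℝ T : Set V) ⊆ Submodule.span ℝ (S ∪ T) := by
  rintro _ ⟨x, hx, y, hy, rfl⟩
  refine Submodule.add_mem _ ?_ (Submodule.span_mono subset_union_right hy)
  exact convexHull_min (subset_union_left.trans Submodule.subset_span) (Submodule.convex _) hx

theorem Finset.exists_pos_weights_of_neg_smul_mem_convexHull_add {S : Finset V}
    {M : Submodule ℝ V} {w : V → ℝ} (hw₀ : ∀ s ∈ S, 0 < w s) (hw₁ : ∑ s ∈ S, w s = 1) {ε : ℝ}
    (hε : 0 < ε) (h : -(ε • ∑ s ∈ S, w s • s) ∈ convexHull ℝ (S : Set V) + (M : Set V)) :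
    ∃ a : V → ℝ, (∀ s ∈ S, 0 < a s) ∧ ∑ s ∈ S, a s = 1 ∧ ∑ s ∈ S, a s • s ∈ M := by
  obtain ⟨x, hx, m, hm, hxm⟩ := h
  obtain ⟨b, hb₀, hb₁, rfl⟩ := Finset.mem_convexHull'.1 hx
  refine ⟨fun s => (ε * w s + b s) / (1 + ε), fun s hs => ?_, ?_, ?_⟩
  · have := hw₀ s hs
    have := hb₀ s hs
    positivity
  · rw [← Finset.sum_div, Finset.sum_add_distrib, ← Finset.mul_sum, hw₁, hb₁, mul_one,
      add_comm, div_self (by positivity)]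
  · convert M.smul_mem (-(1 + ε)⁻¹) hm using 1
    rw [eq_sub_of_add_eq' hxm]
    simp only [div_eq_inv_mul, mul_smul, add_smul, Finset.sum_add_distrib, ← Finset.smul_sum]
    module

theorem Finset.eventually_sum_add_smul_mem_convexHull {S : Finset V} {a d : V → ℝ}
    (ha₀ : ∀ s ∈ S, 0 ≤ a s) (ha₁ : ∑ s ∈ S, a s = 1) (hd₀ : ∑ s ∈ S, d s = 0)
    (hd : ∀ s ∈ S, a s = 0 → d s = 0) :
    ∀ᶠ ε in 𝓝 (0 : ℝ), ∑ s ∈ S, (a s + ε * d s) • s ∈ convexHull ℝ (S : Set V) := by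
  have hnonneg : ∀ᶠ ε in 𝓝 (0 : ℝ), ∀ s ∈ S, 0 ≤ a s + ε * d s := by
    rw [eventually_all_finset]
    intro s hs
    rcases (ha₀ s hs).eq_or_lt with has | has
    · simp [← has, hd s hs has.symm]
    · have hcont : Continuous fun ε : ℝ => a s + ε * d s := by fun_prop
      exact (hcont.tendsto' 0 (a s) (by simp)).eventually (eventually_ge_nhds has)
  filter_upwards [hnonneg] with ε hε
  refine (convex_convexHull ℝ _).sum_mem hε ?_ fun s hs => subset_convexHull ℝ _ hs
  rw [Finset.sum_add_distrib, ← Finset.mul_sum, ha₁, hd₀, mul_zero, add_zero]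

theorem Finset.exists_coeffs_of_mem_span_support {S : Finset V} {a : V → ℝ} {u : V}
    (hu : u ∈ Submodule.span ℝ {s | s ∈ S ∧ a s ≠ 0}) :
    ∃ c : V → ℝ, (∀ s ∈ S, a s = 0 → c s = 0) ∧ ∑ s ∈ S, c s • s = u := by
  obtain ⟨c, t, hts, hct, rfl⟩ := Submodule.mem_span_iff_exists_finset_subset.1 hu
  have hc : ∀ s, s ∉ t → c s = 0 := fun s hs => Function.notMem_support.1 fun h => hs (hct h)
  refine ⟨c, fun s _ has => hc s fun hst => (hts hst).2 has, ?_⟩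
  exact (Finset.sum_subset (fun s hs => (hts hs).1) fun s _ hst => by rw [hc s hst, zero_smul]).symm

theorem Finset.exists_pos_smul_mem_convexHull_add {S : Finset V} {M : Submodule ℝ V}
    {a : V → ℝ} (ha₀ : ∀ s ∈ S, 0 ≤ a s) (ha₁ : ∑ s ∈ S, a s = 1)
    (haM : ∑ s ∈ S, a s • s ∈ M) {v : V}
    (hv : v ∈ Submodule.span ℝ {s | s ∈ S ∧ a s ≠ 0} ⊔ M) :
    ∃ ε : ℝ, 0 < ε ∧ ε • v ∈ convexHull ℝ (S : Set V) + (M : Set V) := by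
  obtain ⟨u, hu, w, hw, rfl⟩ := Submodule.mem_sup.1 hv
  obtain ⟨c, hca, rfl⟩ := exists_coeffs_of_mem_span_support hu
  set z := ∑ s ∈ S, a s • s
  set C := ∑ s ∈ S, c s
  have hd₀ : ∑ s ∈ S, (c s - C * a s) = 0 := by
    rw [Finset.sum_sub_distrib, ← Finset.mul_sum, ha₁, mul_one, sub_self]
  have hd : ∀ s ∈ S, a s = 0 → c s - C * a s = 0 := fun s hs has => by simp [has, hca s hs has]
  obtain ⟨ε, hε, hεpos⟩ := ((eventually_sum_add_smul_mem_convexHull ha₀ ha₁ hd₀ hd).filter_mono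
    nhdsWithin_le_nhds |>.and (self_mem_nhdsWithin (s := Set.Ioi (0 : ℝ)))).exists
  refine ⟨ε, hεpos, _, hε, ε • w - z + (ε * C) • z,
    M.add_mem (M.sub_mem (M.smul_mem ε hw) haM) (M.smul_mem _ haM), ?_⟩
  simp only [add_smul, mul_smul, sub_smul, Finset.sum_add_distrib, Finset.sum_sub_distrib,
    ← Finset.smul_sum]
  module

end Weights

theorem exists_pos_smul_mem_of_zero_mem_interior {E : Type*} [AddCommGroup E] [Module ℝ E]
    [TopologicalSpace E] [ContinuousSMul ℝ E] {s : Set E} (hs : (0 : E) ∈ interior s) (x : E) :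
    ∃ ε : ℝ, 0 < ε ∧ ε • x ∈ s := by
  have hlim : Tendsto (fun ε : ℝ => ε • x) (𝓝[>] 0) (𝓝 0) := by
    have hcont : Continuous fun ε : ℝ => ε • x := continuous_id.smul continuous_const
    exact tendsto_nhdsWithin_of_tendsto_nhds (hcont.tendsto' 0 0 (zero_smul ℝ x))
  exact ((hlim.eventually (mem_interior_iff_mem_nhds.1 hs)).and self_mem_nhdsWithin).exists.imp
    fun _ h => ⟨h.2, h.1⟩

theorem Finset.exists_pos_weights_of_zero_mem_interior {V : Type*} [AddCommGroup V] [Module ℝ V]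
    [TopologicalSpace V] [ContinuousSMul ℝ V] {S : Finset V} {M : Submodule ℝ V}
    (h : (0 : V) ∈ interior (convexHull ℝ (S : Set V) + (M : Set V))) :
    ∃ a : V → ℝ, (∀ s ∈ S, 0 < a s) ∧ ∑ s ∈ S, a s = 1 ∧ ∑ s ∈ S, a s • s ∈ M := by
  have hS : S.Nonempty := by
    obtain ⟨x, hx, -⟩ := interior_subset h
    simpa using (convexHull_nonempty_iff (𝕜 := ℝ)).1 ⟨x, hx⟩
  have hcard : (0 : ℝ) < S.card := by exact_mod_cast hS.card_pos
  obtain ⟨ε, hε, hmem⟩ := exists_pos_smul_mem_of_zero_mem_interior h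
    (-∑ s ∈ S, (S.card : ℝ)⁻¹ • s)
  refine exists_pos_weights_of_neg_smul_mem_convexHull_add (fun _ _ => inv_pos.2 hcard) ?_ hε
    (by rwa [← smul_neg])
  rw [Finset.sum_const, nsmul_eq_mul, mul_inv_cancel₀ hcard.ne']

section FiniteDimensional

variable {V : Type*} [AddCommGroup V] [Module ℝ V] [FiniteDimensional ℝ V]
  [TopologicalSpace V] [IsTopologicalAddGroup V] [ContinuousSMul ℝ V] [T2Space V]

theorem Convex.interior_nonempty_of_affineSpan_eq_top {s : Set V} (hs : Convex ℝ s)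
    (h : affineSpan ℝ s = ⊤) : (interior s).Nonempty := by
  let e : V ≃L[ℝ] (Fin (Module.finrank ℝ V) → ℝ) :=
    (Module.finBasis ℝ V).equivFun.toContinuousLinearEquiv
  have hspan : affineSpan ℝ (e '' s) = ⊤ := by
    have he : ⇑e = ⇑(e : V →ₗ[ℝ] _).toAffineMap := rfl
    rw [he, ← AffineSubspace.map_span, h, AffineMap.map_top_of_surjective _ e.surjective]
  obtain ⟨y, hy⟩ := ((hs.linear_image (e : V →ₗ[ℝ] (Fin (Module.finrank ℝ V) → ℝ))
    ).interior_nonempty_iff_affineSpan_eq_top).2 hspan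
  obtain ⟨x, hx, -⟩ : y ∈ e.toHomeomorph '' interior s := by
    rw [e.toHomeomorph.image_interior]; exact hy
  exact ⟨x, hx⟩

theorem Convex.zero_mem_interior_of_forall_exists_smul_mem {s : Set V} (hs : Convex ℝ s)
    (h : ∀ v : V, ∃ ε : ℝ, 0 < ε ∧ ε • v ∈ s) : (0 : V) ∈ interior s := by
  have h0 : (0 : V) ∈ s := by simpa using (h 0).choose_spec.2
  have hspan : affineSpan ℝ s = ⊤ := by
    refine top_unique fun v _ => ?_
    obtain ⟨ε, hε, hv⟩ := h v
    simpa [inv_smul_smul₀ hε.ne'] using AffineSubspace.smul_vsub_vadd_mem (affineSpan ℝ s) ε⁻¹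
      (mem_affineSpan ℝ hv) (mem_affineSpan ℝ h0) (mem_affineSpan ℝ h0)
  obtain ⟨x, hx⟩ := hs.interior_nonempty_of_affineSpan_eq_top hspan
  obtain ⟨ε, hε, hmx⟩ := h (-x)
  -- `0` lies on the open segment from the interior point `x` to `ε • (-x) ∈ s`
  have hcombo := hs.combo_interior_self_mem_interior hx hmx (a := ε / (1 + ε))
    (b := 1 / (1 + ε)) (by positivity) (by positivity) (by field_simp; ring)
  convert hcombo using 1
  rw [smul_smul, smul_neg, ← sub_eq_add_neg, eq_comm, sub_eq_zero]
  congr 1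
  ring

end FiniteDimensional

/-- `0` lies in the interior of `convexHull S + span T` iff there is a convex
combination of points of `S` and a linear combination of points of `T` summing to `0`, such
that the points of `S` with nonzero coefficient together with `T` span the whole space. -/
theorem stmt14 (V : Type*) [AddCommGroup V] [Module ℝ V] [FiniteDimensional ℝ V]
    [TopologicalSpace V] [IsTopologicalAddGroup V] [ContinuousSMul ℝ V] [T2Space V]
    (S T : Finset V) :
    0 ∈ interior (convexHull ℝ (S : Set V) + (Submodule.span ℝ (T : Set V) : Set V)) ↔
      ∃ a b : V → ℝ,
        (∀ s ∈ S, 0 ≤ a s) ∧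
        (∑ s ∈ S, a s) = 1 ∧
        ((∑ s ∈ S, a s • s) + ∑ t ∈ T, b t • t) = 0 ∧
        Submodule.span ℝ ({s : V | s ∈ S ∧ a s ≠ 0} ∪ (T : Set V)) = ⊤ := by
  constructor
  · intro h0
    obtain ⟨a, ha₀, ha₁, haT⟩ := S.exists_pos_weights_of_zero_mem_interior h0
    obtain ⟨b, -, hb⟩ := Submodule.mem_span_finset.1 (neg_mem haT)
    have hsupp : {s : V | s ∈ S ∧ a s ≠ 0} = S :=
      Set.ext fun s => ⟨And.left, fun hs => ⟨hs, (ha₀ s hs).ne'⟩⟩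
    refine ⟨a, b, fun s hs => (ha₀ s hs).le, ha₁, by rw [hb, add_neg_cancel], ?_⟩
    rw [hsupp]
    exact Submodule.eq_top_of_nonempty_interior' _
      ⟨0, interior_mono (convexHull_add_span_subset_span_union _ _) h0⟩
  · rintro ⟨a, b, ha₀, ha₁, hab, hspan⟩
    have haT : ∑ s ∈ S, a s • s ∈ Submodule.span ℝ (T : Set V) := by
      rw [eq_neg_of_add_eq_zero_left hab]
      exact neg_mem <| Submodule.sum_mem _ fun t ht =>
        Submodule.smul_mem _ _ (Submodule.subset_span ht)
    refine ((convex_convexHull ℝ _).add (Submodule.span ℝ _).convex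
      ).zero_mem_interior_of_forall_exists_smul_mem fun v => S.exists_pos_smul_mem_convexHull_add
        ha₀ ha₁ haT ?_
    rw [← Submodule.span_union, hspan]
    trivial
end

section
/- Fix 𝔽 ∈ {ℝ, ℂ, ℍ} and an integer m ≥ 3. Let η₃ = diag(1, 1, −1) ∈ M₃(ℝ) and let η = diag(η₃, I_{m−2}) ∈ M_{m+1}(𝔽) (a diagonal form of signature (m, 1)). Let SO(2,1) = {h ∈ M₃(ℝ) : hᵀη₃h = η₃ and det(h) = 1}, and for h ∈ SO(2,1) let ι(h) ∈ M_{m+1}(𝔽) be the block-diagonal matrix diag(h, I_{m−2}) (real entries viewed in 𝔽). Then {X ∈ M_{m+1}(𝔽) : X*ηX = η and X·ι(h) = ι(h)·X for all h ∈ SO(2,1)} is equal to {block-diagonal diag(c·I₃, k) : c ∈ 𝔽 with c̄c = 1, and k ∈ M_{m−2}(𝔽) with k*k = I_{m−2}}. -/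
/-!
Because ℝ is central in `𝔽`, a matrix commuting with a real matrix `h` can be tested entry by
entry. The diagonal sign matrices in `SO(2,1)` separate every pair of indices, so commuting with
them forces the off-diagonal blocks of `X` to vanish and its `3 × 3` block `A` to be diagonal; a
rotation in the `(0,1)`-plane and a boost in the `(1,2)`-plane then equalise the diagonal entries
of `A`, so `A = c • 1`. For `X = diag(c • 1, k)` the condition `Xᴴ η X = η` splits into
`star c * c = 1` and `kᴴ k = 1`.
-/

open Matrix

namespace Matrix

section CommuteAlgebraMap

variable {K 𝔽 m n : Type*} [Field K] [Ring 𝔽] [Algebra K 𝔽] [Fintype n]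

theorem apply_eq_zero_of_diagonal_mul_eq_mul_diagonal [Fintype m] [DecidableEq m]
    [DecidableEq n] {d : m → K} {e : n → K} {M : Matrix m n 𝔽}
    (hM : diagonal (fun i => algebraMap K 𝔽 (d i)) * M = M * diagonal fun j => algebraMap K 𝔽 (e j))
    {i : m} {j : n} (hij : d i ≠ e j) : M i j = 0 := by
  have hij' := congrFun₂ hM i j
  rw [diagonal_mul, mul_diagonal, ← Algebra.commutes] at hij'
  have hsmul : (d i - e j) • M i j = 0 := by
    rw [sub_smul, Algebra.smul_def, Algebra.smul_def, hij', sub_self]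
  exact (smul_eq_zero.mp hsmul).resolve_left (sub_ne_zero.mpr hij)

theorem IsDiag.apply_eq_apply_of_commute_map {A : Matrix n n 𝔽} (hA : A.IsDiag)
    {h : Matrix n n K} (hAh : Commute A (h.map (algebraMap K 𝔽))) {i j : n} (hij : h i j ≠ 0) :
    A i i = A j j := by
  have hij' := congrFun₂ hAh.eq i j
  rw [mul_apply, mul_apply, Fintype.sum_eq_single i fun k hk => by rw [hA hk.symm, zero_mul],
    Fintype.sum_eq_single j fun k hk => by rw [hA hk, mul_zero], map_apply,
    ← Algebra.commutes] at hij'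
  have hsmul : h i j • (A i i - A j j) = 0 := by
    rw [smul_sub, Algebra.smul_def, Algebra.smul_def, hij', sub_self]
  exact sub_eq_zero.mp ((smul_eq_zero.mp hsmul).resolve_left hij)

theorem commute_smul_one_map_algebraMap [DecidableEq n] (c : 𝔽) (h : Matrix n n K) :
    Commute (c • (1 : Matrix n n 𝔽)) (h.map (algebraMap K 𝔽)) := by
  ext i j
  simp [mul_apply, one_apply, Algebra.commutes]

end CommuteAlgebraMap

section Blocks

variable {α l n : Type*} [Semiring α] [Fintype l] [Fintype n] [DecidableEq n]

theorem fromBlocks_mul_fromBlocks_one_comm_iff {A H : Matrix l l α} {B : Matrix l n α}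
    {C : Matrix n l α} {D : Matrix n n α} :
    fromBlocks A B C D * fromBlocks H 0 0 1 = fromBlocks H 0 0 1 * fromBlocks A B C D ↔
      A * H = H * A ∧ B = H * B ∧ C * H = C := by
  simp [fromBlocks_multiply, fromBlocks_inj]

theorem fromBlocks_conjTranspose_mul_fromBlocks_one_mul [StarRing α] (P E : Matrix l l α)
    (Q : Matrix n n α) :
    (fromBlocks P 0 0 Q)ᴴ * fromBlocks E 0 0 1 * fromBlocks P 0 0 Q =
      fromBlocks (Pᴴ * E * P) 0 0 (Qᴴ * Q) := by
  simp [fromBlocks_conjTranspose, fromBlocks_multiply]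

theorem smul_one_conjTranspose_mul_diagonal_mul [DecidableEq l] [StarRing α] (c : α)
    (d : l → α) :
    (c • (1 : Matrix l l α))ᴴ * diagonal d * (c • 1) = diagonal fun i => star c * d i * c := by
  rw [smul_one_eq_diagonal, diagonal_conjTranspose, diagonal_mul_diagonal, diagonal_mul_diagonal]
  rfl

end Blocks

end Matrix

theorem smul_one_conjTranspose_mul_diagonal_mul_eq_iff {𝔽 : Type*} [Ring 𝔽] [StarRing 𝔽]
    (c : 𝔽) :
    (c • (1 : Matrix (Fin 3) (Fin 3) 𝔽))ᴴ * diagonal ![1, 1, -1] * (c • 1) =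
      diagonal ![1, 1, -1] ↔ star c * c = 1 := by
  rw [smul_one_conjTranspose_mul_diagonal_mul, diagonal_eq_diagonal_iff]
  refine ⟨fun h => by simpa using h 0, fun hc i => ?_⟩
  fin_cases i <;> simp [hc]

def specialOrthogonal21 : Set (Matrix (Fin 3) (Fin 3) ℝ) :=
  {h | hᵀ * diagonal ![1, 1, -1] * h = diagonal ![1, 1, -1] ∧ h.det = 1}

def signVector (k i : Fin 3) : ℝ := if i = k then 1 else -1

theorem diagonal_signVector_mem (k : Fin 3) : diagonal (signVector k) ∈ specialOrthogonal21 := by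
  refine ⟨?_, ?_⟩
  · rw [diagonal_transpose, diagonal_mul_diagonal, diagonal_mul_diagonal]
    congr 1
    ext i
    fin_cases i <;> fin_cases k <;> simp [signVector]
  · fin_cases k <;> simp [signVector, det_diagonal, Fin.prod_univ_three]

theorem rotation_mem :
    (!![0, -1, 0; 1, 0, 0; 0, 0, 1] : Matrix (Fin 3) (Fin 3) ℝ) ∈ specialOrthogonal21 := by
  refine ⟨?_, ?_⟩
  · ext i j; fin_cases i <;> fin_cases j <;> simp [mul_apply, Fin.sum_univ_three]
  · simp [det_fin_three]

-- A boost with rational entries: `(5/3)² - (4/3)² = 1`.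
theorem boost_mem :
    (!![1, 0, 0; 0, 5 / 3, 4 / 3; 0, 4 / 3, 5 / 3] : Matrix (Fin 3) (Fin 3) ℝ) ∈
      specialOrthogonal21 := by
  refine ⟨?_, ?_⟩
  · ext i j; fin_cases i <;> fin_cases j <;> simp [mul_apply, Fin.sum_univ_three] <;> norm_num
  · simp [det_fin_three]; norm_num

section Centralizer

variable {𝔽 : Type*} [Ring 𝔽] [Algebra ℝ 𝔽]

theorem eq_smul_one_of_forall_commute {A : Matrix (Fin 3) (Fin 3) 𝔽}
    (hA : ∀ h ∈ specialOrthogonal21, Commute A (h.map (algebraMap ℝ 𝔽))) : A = A 0 0 • 1 := by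
  have hdiag : A.IsDiag := fun i j hij => by
    refine apply_eq_zero_of_diagonal_mul_eq_mul_diagonal (d := signVector i) (e := signVector i)
      ?_ ?_
    · rw [← diagonal_map (map_zero _), (hA _ (diagonal_signVector_mem i)).eq]
    · norm_num [signVector, Ne.symm hij]
  have h01 : A 1 1 = A 0 0 := hdiag.apply_eq_apply_of_commute_map (hA _ rotation_mem) (by simp)
  have h12 : A 1 1 = A 2 2 := hdiag.apply_eq_apply_of_commute_map (hA _ boost_mem) (by simp)
  rw [← hdiag.diagonal_diag, smul_one_eq_diagonal]
  congr 1
  ext i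
  fin_cases i <;> simp [← h01, h12]

variable {n : Type*} [Fintype n] [DecidableEq n]

theorem eq_zero_of_forall_eq_mul {B : Matrix (Fin 3) n 𝔽}
    (hB : ∀ h ∈ specialOrthogonal21, B = h.map (algebraMap ℝ 𝔽) * B) : B = 0 := by
  ext i j
  obtain ⟨k, hk⟩ := exists_ne i
  refine apply_eq_zero_of_diagonal_mul_eq_mul_diagonal (d := signVector k) (e := fun _ => 1) ?_ ?_
  · simpa [diagonal_map] using (hB _ (diagonal_signVector_mem k)).symm
  · norm_num [signVector, hk.symm]

theorem eq_zero_of_forall_mul_eq {C : Matrix n (Fin 3) 𝔽}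
    (hC : ∀ h ∈ specialOrthogonal21, C * h.map (algebraMap ℝ 𝔽) = C) : C = 0 := by
  ext i j
  obtain ⟨k, hk⟩ := exists_ne j
  refine apply_eq_zero_of_diagonal_mul_eq_mul_diagonal (d := fun _ => 1) (e := signVector k) ?_ ?_
  · simpa [diagonal_map] using (hC _ (diagonal_signVector_mem k)).symm
  · norm_num [signVector, hk.symm]

end Centralizer

theorem stmt16_general (𝔽 : Type*) [Ring 𝔽] [StarRing 𝔽] [Algebra ℝ 𝔽]
    (m : ℕ)
    (η₃ℝ : Matrix (Fin 3) (Fin 3) ℝ) (hη₃ℝ : η₃ℝ = Matrix.diagonal ![1, 1, -1])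
    (η₃ : Matrix (Fin 3) (Fin 3) 𝔽) (hη₃ : η₃ = Matrix.diagonal ![1, 1, -1])
    (η : Matrix (Fin 3 ⊕ Fin (m - 2)) (Fin 3 ⊕ Fin (m - 2)) 𝔽)
    (hη : η = fromBlocks η₃ 0 0 1)
    (SO21 : Set (Matrix (Fin 3) (Fin 3) ℝ))
    (hSO21 : SO21 = {h | hᵀ * η₃ℝ * h = η₃ℝ ∧ h.det = 1})
    (ι : Matrix (Fin 3) (Fin 3) ℝ →
      Matrix (Fin 3 ⊕ Fin (m - 2)) (Fin 3 ⊕ Fin (m - 2)) 𝔽)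
    (hι : ∀ h, ι h = fromBlocks (h.map (algebraMap ℝ 𝔽)) 0 0 1) :
    {X : Matrix (Fin 3 ⊕ Fin (m - 2)) (Fin 3 ⊕ Fin (m - 2)) 𝔽 |
        Xᴴ * η * X = η ∧ ∀ h ∈ SO21, X * ι h = ι h * X} =
      {X : Matrix (Fin 3 ⊕ Fin (m - 2)) (Fin 3 ⊕ Fin (m - 2)) 𝔽 |
        ∃ (c : 𝔽) (k : Matrix (Fin (m - 2)) (Fin (m - 2)) 𝔽),
          star c * c = 1 ∧ kᴴ * k = 1 ∧
          X = fromBlocks (c • (1 : Matrix (Fin 3) (Fin 3) 𝔽)) 0 0 k} := by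
  subst hη₃ℝ hη₃ hη hSO21
  ext X
  constructor
  · rintro ⟨hηX, hcomm⟩
    obtain ⟨A, B, C, D, rfl⟩ : ∃ A B C D, X = fromBlocks A B C D :=
      ⟨_, _, _, _, (fromBlocks_toBlocks X).symm⟩
    simp only [hι, fromBlocks_mul_fromBlocks_one_comm_iff] at hcomm
    obtain rfl : B = 0 := eq_zero_of_forall_eq_mul fun h hh => (hcomm h hh).2.1
    obtain rfl : C = 0 := eq_zero_of_forall_mul_eq fun h hh => (hcomm h hh).2.2
    rw [eq_smul_one_of_forall_commute fun h hh => (hcomm h hh).1] at hηX ⊢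
    rw [fromBlocks_conjTranspose_mul_fromBlocks_one_mul, fromBlocks_inj] at hηX
    exact ⟨A 0 0, D, (smul_one_conjTranspose_mul_diagonal_mul_eq_iff _).mp hηX.1, hηX.2.2.2, rfl⟩
  · rintro ⟨c, k, hc, hk, rfl⟩
    refine ⟨?_, fun h _ => ?_⟩
    · rw [fromBlocks_conjTranspose_mul_fromBlocks_one_mul,
        (smul_one_conjTranspose_mul_diagonal_mul_eq_iff c).mpr hc, hk]
    · rw [hι, fromBlocks_mul_fromBlocks_one_comm_iff]
      exact ⟨(commute_smul_one_map_algebraMap c h).eq, by simp, by simp⟩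

/-- the centralizer of the standard copy of `SO(2,1)` in `O(m,1,𝔽)` is
`O(1,𝔽) × O(m−2,𝔽)`, for `𝔽 ∈ {ℝ, ℂ, ℍ}` and `m ≥ 3`. -/
theorem stmt16 (𝔽 : Type*) [Ring 𝔽] [StarRing 𝔽] [Algebra ℝ 𝔽] [StarModule ℝ 𝔽]
    (h𝔽 : Nonempty (𝔽 ≃⋆ₐ[ℝ] ℝ) ∨ Nonempty (𝔽 ≃⋆ₐ[ℝ] ℂ) ∨
      Nonempty (𝔽 ≃⋆ₐ[ℝ] Quaternion ℝ))
    (m : ℕ) (hm : 3 ≤ m)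
    (η₃ℝ : Matrix (Fin 3) (Fin 3) ℝ) (hη₃ℝ : η₃ℝ = Matrix.diagonal ![1, 1, -1])
    (η₃ : Matrix (Fin 3) (Fin 3) 𝔽) (hη₃ : η₃ = Matrix.diagonal ![1, 1, -1])
    (η : Matrix (Fin 3 ⊕ Fin (m - 2)) (Fin 3 ⊕ Fin (m - 2)) 𝔽)
    (hη : η = fromBlocks η₃ 0 0 1)
    (SO21 : Set (Matrix (Fin 3) (Fin 3) ℝ))
    (hSO21 : SO21 = {h | hᵀ * η₃ℝ * h = η₃ℝ ∧ h.det = 1})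
    (ι : Matrix (Fin 3) (Fin 3) ℝ →
      Matrix (Fin 3 ⊕ Fin (m - 2)) (Fin 3 ⊕ Fin (m - 2)) 𝔽)
    (hι : ∀ h, ι h = fromBlocks (h.map (algebraMap ℝ 𝔽)) 0 0 1) :
    {X : Matrix (Fin 3 ⊕ Fin (m - 2)) (Fin 3 ⊕ Fin (m - 2)) 𝔽 |
        Xᴴ * η * X = η ∧ ∀ h ∈ SO21, X * ι h = ι h * X} =
      {X : Matrix (Fin 3 ⊕ Fin (m - 2)) (Fin 3 ⊕ Fin (m - 2)) 𝔽 |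
        ∃ (c : 𝔽) (k : Matrix (Fin (m - 2)) (Fin (m - 2)) 𝔽),
          star c * c = 1 ∧ kᴴ * k = 1 ∧
          X = fromBlocks (c • (1 : Matrix (Fin 3) (Fin 3) 𝔽)) 0 0 k} :=
  stmt16_general 𝔽 m η₃ℝ hη₃ℝ η₃ hη₃ η hη SO21 hSO21 ι hι
end
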